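/- Let γ > 1, ψ(s) = s^γ/(γ−1), and ψ(ρ|r) = ψ(ρ) − ψ(r) − ψ'(r)(ρ−r). Let 0 < c_p ≤ C_p and R > C_p. Then there exist constants C₃ > 0 and C₄ > 0, depending only on γ, c_p, C_p, R, such that for all r ∈ [c_p, C_p] and all ρ ≥ 0: ψ(ρ|r) ≥ C₃(ρ−r)² if 0 ≤ ρ ≤ R, and ψ(ρ|r) ≥ C₄|ρ−r|^γ if ρ > R. -/

import Mathlib

open MeasureTheory Real Set
open scoped ENNReal NNReal
noncomputable section

/-- Internal energy `ψ(s) = s^γ/(γ-1)`. -/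
def psi (γ s : ℝ) : ℝ := s ^ γ / (γ - 1)

/-- Derivative `ψ'(s) = γ/(γ-1) s^(γ-1)`. -/
def psi' (γ s : ℝ) : ℝ := γ / (γ - 1) * s ^ (γ - 1)

/-- The Bregman distance `ψ(ρ|r) = ψ(ρ) - ψ(r) - ψ'(r)(ρ - r)`. -/
def psiB (γ ρ r : ℝ) : ℝ := psi γ ρ - psi γ r - psi' γ r * (ρ - r)

/-- MVT-type lower bound: if `f' ≥ c` on `(a,b)` then `f b - f a ≥ c (b-a)`. -/
lemma key_mvt (f f' : ℝ → ℝ) (a b c : ℝ) (hab : a ≤ b)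
    (hc : ContinuousOn f (Set.Icc a b))
    (hd : ∀ x ∈ Set.Ioo a b, HasDerivAt f (f' x) x)
    (hle : ∀ x ∈ Set.Ioo a b, c ≤ f' x) :
    c * (b - a) ≤ f b - f a := by
  set g : ℝ → ℝ := fun x => f x - c * x with hg
  have hmono : MonotoneOn g (Set.Icc a b) := by
    apply monotoneOn_of_deriv_nonneg (convex_Icc a b)
      (hc.sub ((continuous_const.mul continuous_id).continuousOn))
    · intro x hx
      rw [interior_Icc] at hx
      exact ((hd x hx).sub ((hasDerivAt_id x).const_mul c)).differentiableAt.differentiableWithinAt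
    · intro x hx
      rw [interior_Icc] at hx
      have hdg : deriv (f - (fun x => c) * id) x = f' x - c * 1 :=
        ((hd x hx).sub ((hasDerivAt_id x).const_mul c)).deriv
      rw [hdg]
      have := hle x hx
      simp only [id_eq, mul_one]
      linarith
  have := hmono (Set.left_mem_Icc.2 hab) (Set.right_mem_Icc.2 hab) hab
  simp only [hg] at this
  linarith

/-- Uniform strong monotonicity of `x ↦ x^β` on `[0,R]` away from the
degenerate region: `b^β - a^β ≥ c₀ (b-a)` when `b ≥ cp`. -/
lemma lemB (β : ℝ) (hβ : 0 < β) (cp R : ℝ) (hcp : 0 < cp) (hR : cp ≤ R) :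
    ∃ c₀ : ℝ, 0 < c₀ ∧ ∀ a b : ℝ, 0 ≤ a → a ≤ b → b ≤ R → cp ≤ b →
      c₀ * (b - a) ≤ b ^ β - a ^ β := by
  have hR0 : 0 < R := lt_of_lt_of_le hcp hR
  have hcont : ∀ s : Set ℝ, ContinuousOn (fun x : ℝ => x ^ β) s := fun s =>
    fun x _ => (Real.continuousAt_rpow_const x β (Or.inr hβ.le)).continuousWithinAt
  have hder : ∀ a b : ℝ, 0 ≤ a → ∀ x ∈ Set.Ioo a b,
      HasDerivAt (fun x : ℝ => x ^ β) (β * x ^ (β - 1)) x := by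
    intro a b ha x hx
    exact Real.hasDerivAt_rpow_const (Or.inl (ne_of_gt (lt_of_le_of_lt ha hx.1)))
  rcases le_or_gt β 1 with hβ1 | hβ1
  · refine ⟨β * R ^ (β - 1), by positivity, fun a b ha hab hbR hcb => ?_⟩
    exact key_mvt _ _ a b _ hab (hcont _) (hder a b ha) (fun x hx => by
      have hx0 : 0 < x := lt_of_le_of_lt ha hx.1
      have : R ^ (β - 1) ≤ x ^ (β - 1) :=
        Real.rpow_le_rpow_of_nonpos hx0 (le_trans hx.2.le hbR) (by linarith)
      exact mul_le_mul_of_nonneg_left this hβ.le)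
  · set m := cp / 2 with hm
    have hm0 : 0 < m := by positivity
    have hmlt : m < cp := by rw [hm]; linarith
    have hδ : 0 < cp ^ β - m ^ β := by
      have := Real.rpow_lt_rpow hm0.le hmlt hβ
      linarith
    refine ⟨min (β * m ^ (β - 1)) ((cp ^ β - m ^ β) / R),
      lt_min (by positivity) (div_pos hδ hR0), fun a b ha hab hbR hcb => ?_⟩
    rcases le_or_gt m a with hma | hma
    · calc min (β * m ^ (β - 1)) ((cp ^ β - m ^ β) / R) * (b - a)
          ≤ β * m ^ (β - 1) * (b - a) :=
            mul_le_mul_of_nonneg_right (min_le_left _ _) (by linarith)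
        _ ≤ b ^ β - a ^ β := key_mvt _ _ a b _ hab (hcont _) (hder a b ha) (fun x hx => by
            have : m ^ (β - 1) ≤ x ^ (β - 1) :=
              Real.rpow_le_rpow hm0.le (le_trans hma hx.1.le) (by linarith)
            exact mul_le_mul_of_nonneg_left this hβ.le)
    · have h1 : a ^ β ≤ m ^ β := Real.rpow_le_rpow ha hma.le hβ.le
      have h2 : cp ^ β ≤ b ^ β := Real.rpow_le_rpow hcp.le hcb hβ.le
      calc min (β * m ^ (β - 1)) ((cp ^ β - m ^ β) / R) * (b - a)
          ≤ ((cp ^ β - m ^ β) / R) * (b - a) :=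
            mul_le_mul_of_nonneg_right (min_le_right _ _) (by linarith)
        _ ≤ ((cp ^ β - m ^ β) / R) * R :=
            mul_le_mul_of_nonneg_left (by linarith) (by positivity)
        _ = cp ^ β - m ^ β := by field_simp
        _ ≤ b ^ β - a ^ β := by linarith

/-- Derivative of the Bregman distance in its first argument. -/
lemma hasDerivAt_psiB (γ : ℝ) (hγ : 1 < γ) (r x : ℝ) :
    HasDerivAt (fun ρ => psiB γ ρ r) (psi' γ x - psi' γ r) x := by
  have h1 : HasDerivAt (fun ρ : ℝ => ρ ^ γ) (γ * x ^ (γ - 1)) x :=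
    Real.hasDerivAt_rpow_const (Or.inr hγ.le)
  have h3 : HasDerivAt (fun ρ : ℝ => psi' γ r * (ρ - r)) (psi' γ r) x := by
    simpa using ((hasDerivAt_id' (x := x)).sub_const r).const_mul (psi' γ r)
  have h4 := ((h1.div_const (γ - 1)).sub_const (psi γ r)).sub h3
  have hne : γ - 1 ≠ 0 := by intro h; rw [sub_eq_zero] at h; exact absurd h.symm hγ.ne
  have heq : psi' γ x - psi' γ r = γ * x ^ (γ - 1) / (γ - 1) - psi' γ r := by
    simp only [psi']
    field_simp
  rw [heq]
  exact h4

/-- Lower bounds for the Bregman distance associated to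
`ψ(s) = s^γ/(γ-1)`: quadratic below the level `R`, of power `γ` above it,
uniformly for `r ∈ [c_p, C_p]`. -/
theorem bregman_lower_bounds (γ : ℝ) (hγ : 1 < γ)
    (cp Cp R : ℝ) (hcp : 0 < cp) (hcpCp : cp ≤ Cp) (hR : Cp < R) :
    ∃ C₃ C₄ : ℝ, 0 < C₃ ∧ 0 < C₄ ∧
      ∀ r ∈ Set.Icc cp Cp, ∀ ρ : ℝ, 0 ≤ ρ →
        (ρ ≤ R → C₃ * (ρ - r) ^ 2 ≤ psiB γ ρ r) ∧
        (R < ρ → C₄ * |ρ - r| ^ γ ≤ psiB γ ρ r) := by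
  have hγ0 : (0:ℝ) < γ - 1 := by linarith
  have hCp0 : 0 < Cp := lt_of_lt_of_le hcp hcpCp
  have hR0 : (0:ℝ) < R := lt_trans hCp0 hR
  obtain ⟨c₀, hc₀, hB⟩ := lemB (γ - 1) hγ0 cp R hcp (by linarith)
  set k : ℝ := γ / (γ - 1) with hk
  have hk0 : 0 < k := by positivity
  set C₃ : ℝ := k * c₀ / 2 with hC3
  have hC30 : 0 < C₃ := by positivity
  have h2C3 : 2 * C₃ = k * c₀ := by rw [hC3]; ring
  -- derivative identity
  have hderb : ∀ x r : ℝ,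
      psi' γ x - psi' γ r = k * (x ^ (γ - 1) - r ^ (γ - 1)) := by
    intro x r; simp only [psi', hk]; ring
  -- first claim
  have claim1 : ∀ r ∈ Set.Icc cp Cp, ∀ ρ : ℝ, 0 ≤ ρ → ρ ≤ R →
      C₃ * (ρ - r) ^ 2 ≤ psiB γ ρ r := by
    intro r hr ρ hρ0 hρR
    obtain ⟨hr1, hr2⟩ := hr
    set F : ℝ → ℝ := fun ρ => psiB γ ρ r - C₃ * (ρ - r) ^ 2 with hF
    have hFr : F r = 0 := by simp [hF, psiB, psi]
    have hFd : ∀ x : ℝ, HasDerivAt F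
        (psi' γ x - psi' γ r - C₃ * (2 * (x - r))) x := by
      intro x
      have h2 : HasDerivAt (fun ρ : ℝ => C₃ * (ρ - r) ^ 2) (C₃ * (2 * (x - r))) x := by
        have := (((hasDerivAt_id' (x := x)).sub_const r).pow 2).const_mul C₃
        exact this.congr_deriv (by push_cast; ring)
      exact (hasDerivAt_psiB γ hγ r x).sub h2
    have hFcont : ∀ s : Set ℝ, ContinuousOn F s := fun s x _ =>
      (hFd x).continuousAt.continuousWithinAt
    rcases le_or_gt r ρ with hrρ | hrρ
    · have h := key_mvt F _ r ρ 0 hrρ (hFcont _) (fun x _ => hFd x) (fun x hx => by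
        have hb := hB r x (le_trans hcp.le hr1) hx.1.le (le_trans hx.2.le hρR)
          (le_trans hr1 hx.1.le)
        rw [hderb x r]
        have hkb := mul_le_mul_of_nonneg_left hb hk0.le
        have heq : C₃ * (2 * (x - r)) = k * (c₀ * (x - r)) := by rw [hC3]; ring
        linarith [hkb, heq])
      rw [hFr] at h
      simp only [hF] at h
      linarith
    · have h := key_mvt (fun x => -F x) _ ρ r 0 hrρ.le
        ((hFcont _).neg) (fun x _ => (hFd x).neg) (fun x hx => by
          have hx0 : (0:ℝ) ≤ x := le_trans hρ0 hx.1.le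
          have hb := hB x r hx0 hx.2.le (by linarith) hr1
          rw [hderb x r]
          have hkb := mul_le_mul_of_nonneg_left hb hk0.le
          have heq : C₃ * (2 * (x - r)) = -(k * (c₀ * (r - x))) := by rw [hC3]; ring
          linarith [hkb, heq])
      simp only [hFr, neg_zero] at h
      simp only [hF] at h
      linarith
  -- constants for the second claim
  have hCpR : Cp / R < 1 := (div_lt_one hR0).2 hR
  have hq : (Cp / R) ^ (γ - 1) < 1 := Real.rpow_lt_one (by positivity) hCpR hγ0
  have hRγ : (0:ℝ) < R ^ γ := Real.rpow_pos_of_pos hR0 γ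
  set C₄ : ℝ := min ((1 - (Cp / R) ^ (γ - 1)) / (γ - 1)) (C₃ * (R - Cp) ^ 2 / R ^ γ)
    with hC4
  have hC40 : 0 < C₄ :=
    lt_min (div_pos (by linarith) hγ0)
      (div_pos (mul_pos hC30 (pow_pos (by linarith) 2)) hRγ)
  refine ⟨C₃, C₄, hC30, hC40, fun r hr ρ hρ0 => ⟨claim1 r hr ρ hρ0, fun hRρ => ?_⟩⟩
  obtain ⟨hr1, hr2⟩ := hr
  have hrρ : r < ρ := lt_of_le_of_lt (le_trans hr2 hR.le) hRρ
  rw [abs_of_pos (by linarith : (0:ℝ) < ρ - r)]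
  set G : ℝ → ℝ := fun x => psiB γ x r - C₄ * (x - r) ^ γ with hG
  have hGd : ∀ x ∈ Set.Ioo R ρ, HasDerivAt G
      (psi' γ x - psi' γ r - C₄ * (γ * (x - r) ^ (γ - 1))) x := by
    intro x hx
    have hxr : x - r ≠ 0 := by
      have := hx.1
      have : r < x := lt_of_le_of_lt (le_trans hr2 hR.le) hx.1
      intro h; rw [sub_eq_zero] at h; exact absurd h.symm (ne_of_lt this)
    have h2 : HasDerivAt (fun y : ℝ => (y - r) ^ γ) (γ * (x - r) ^ (γ - 1)) x := by
      have := HasDerivAt.rpow_const (p := γ)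
        ((hasDerivAt_id' (x := x)).sub_const r) (Or.inl hxr)
      simpa using this
    exact (hasDerivAt_psiB γ hγ r x).sub (h2.const_mul C₄)
  have hGcont : ContinuousOn G (Set.Icc R ρ) := by
    apply ContinuousOn.sub
    · exact fun x _ => (hasDerivAt_psiB γ hγ r x).continuousAt.continuousWithinAt
    · exact continuousOn_const.mul
        (((continuous_id.sub continuous_const).continuousOn).rpow_const
          (fun x _ => Or.inr (by linarith : (0:ℝ) ≤ γ)))
  have hmvt := key_mvt G _ R ρ 0 hRρ.le hGcont hGd (fun x hx => by
    have hxR : R ≤ x := hx.1.le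
    have hx0 : 0 < x := lt_of_lt_of_le hR0 hxR
    have hxγ : (0:ℝ) < x ^ (γ - 1) := Real.rpow_pos_of_pos hx0 _
    have h1 : r ^ (γ - 1) ≤ (Cp / R) ^ (γ - 1) * x ^ (γ - 1) := by
      have e1 : r ^ (γ - 1) ≤ Cp ^ (γ - 1) :=
        Real.rpow_le_rpow (by linarith) hr2 hγ0.le
      have e2 : Cp ^ (γ - 1) = (Cp / R) ^ (γ - 1) * R ^ (γ - 1) := by
        rw [← Real.mul_rpow (by positivity) hR0.le]
        rw [div_mul_cancel₀ _ (ne_of_gt hR0)]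
      have e3 : R ^ (γ - 1) ≤ x ^ (γ - 1) :=
        Real.rpow_le_rpow hR0.le hxR hγ0.le
      calc r ^ (γ-1) ≤ Cp ^ (γ-1) := e1
        _ = (Cp / R) ^ (γ-1) * R ^ (γ-1) := e2
        _ ≤ (Cp / R) ^ (γ-1) * x ^ (γ-1) :=
            mul_le_mul_of_nonneg_left e3 (Real.rpow_nonneg (by positivity) _)
    have h2 : (x - r) ^ (γ - 1) ≤ x ^ (γ - 1) :=
      Real.rpow_le_rpow (by linarith) (by linarith) hγ0.le
    have h3 : C₄ ≤ (1 - (Cp / R) ^ (γ - 1)) / (γ - 1) := min_le_left _ _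
    rw [hderb x r]
    have hchain : C₄ * (γ * (x - r) ^ (γ - 1)) ≤ k * (x ^ (γ - 1) - r ^ (γ - 1)) := by
      calc C₄ * (γ * (x - r) ^ (γ - 1))
          ≤ C₄ * (γ * x ^ (γ - 1)) := by
            apply mul_le_mul_of_nonneg_left _ hC40.le
            exact mul_le_mul_of_nonneg_left h2 (by linarith)
        _ ≤ ((1 - (Cp / R) ^ (γ - 1)) / (γ - 1)) * (γ * x ^ (γ - 1)) :=
            mul_le_mul_of_nonneg_right h3 (mul_nonneg (by linarith) hxγ.le)
        _ = k * (x ^ (γ - 1) - (Cp / R) ^ (γ - 1) * x ^ (γ - 1)) := by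
            rw [hk]
            field_simp
        _ ≤ k * (x ^ (γ - 1) - r ^ (γ - 1)) := by
            apply mul_le_mul_of_nonneg_left _ hk0.le
            linarith
    linarith)
  have hGR : 0 ≤ G R := by
    have h1 : C₃ * (R - r) ^ 2 ≤ psiB γ R r := claim1 r ⟨hr1, hr2⟩ R (by linarith) le_rfl
    have h2 : (R - r) ^ γ ≤ R ^ γ :=
      Real.rpow_le_rpow (by linarith) (by linarith) (by linarith)
    have h3 : C₄ ≤ C₃ * (R - Cp) ^ 2 / R ^ γ := min_le_right _ _
    have h4 : C₄ * (R - r) ^ γ ≤ C₃ * (R - Cp) ^ 2 := by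
      calc C₄ * (R - r) ^ γ ≤ C₄ * R ^ γ := mul_le_mul_of_nonneg_left h2 hC40.le
        _ ≤ (C₃ * (R - Cp) ^ 2 / R ^ γ) * R ^ γ := mul_le_mul_of_nonneg_right h3 hRγ.le
        _ = C₃ * (R - Cp) ^ 2 := by field_simp
    have h5 : C₃ * (R - Cp) ^ 2 ≤ C₃ * (R - r) ^ 2 := by
      apply mul_le_mul_of_nonneg_left _ hC30.le
      nlinarith
    simp only [hG]
    linarith
  simp only [hG] at hmvt hGR
  linarith
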